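/- Let H be the graph on ZMod 16 in which i and j are adjacent if and only if their circular distance (the minimum of (i−j) mod 16 and (j−i) mod 16) is between 1 and 4 (i.e., H is the fourth power of the 16-cycle). Then the map β(i) = i mod 8 is a proper 8-colouring of H, and moreover every colour of Fin 8 appears in the closed neighbourhood of every vertex of H under β, so β is a frozen 8-colouring of H. -/

import Mathlib

/-- The 8-colouring `β` given by `β i = i mod 8`. -/
def β16 : ZMod 16 → Fin 8 := fun i => Fin.ofNat 8 i.val

/-- The fourth power of the 16-cycle: `i` and `j` are adjacent iff their circular distance
is between `1` and `4`. -/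
def H16 : SimpleGraph (ZMod 16) where
  Adj i j := 1 ≤ min (i - j).val (j - i).val ∧ min (i - j).val (j - i).val ≤ 4
  symm := by
    constructor
    rintro i j ⟨h1, h2⟩
    exact ⟨by rwa [min_comm], by rwa [min_comm]⟩
  loopless := by
    constructor
    intro i h
    rw [sub_self] at h
    simp [ZMod.val_zero] at h


/-!
`H16` is the Cayley graph of `ZMod 16` with generators `±1, …, ±4`, and `β16` is the reduction
homomorphism `ZMod 16 → ZMod 8`. A homomorphism colours a Cayley graph properly as soon as it
kills no generator, here because its kernel is `{0, 8}`. The closed neighbourhood of `v` is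
`v + {0, ±1, …, ±4}`, which contains the eight consecutive residues `v - 3, …, v + 4`, so it meets
every colour class.
-/

namespace SimpleGraph

variable {M K : Type*} {s : Set M}

theorem map_ne_map_of_addCayley_adj [AddMonoid M] [AddMonoid K] [IsLeftCancelAdd K]
    (φ : M →+ K) (hφ : ∀ g ∈ s, φ g ≠ 0) {u v : M} (h : (addCayley s).Adj u v) :
    φ u ≠ φ v := by
  intro hφuv
  obtain ⟨-, g, hg, huv | huv⟩ := (addCayley_adj' s u v).1 h
  · apply hφ g hg
    rw [← add_eq_left (a := φ u), ← map_add, huv, hφuv]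
  · apply hφ g hg
    rw [← add_eq_left (a := φ v), ← map_add, ← huv, hφuv]

theorem exists_addCayley_closedNbhd_map_eq [AddGroup M] [AddGroup K] (φ : M →+ K)
    (hφ : ∀ c, ∃ g, (g = 0 ∨ g ∈ s ∨ -g ∈ s) ∧ φ g = c) (v : M) (c : K) :
    ∃ u, (u = v ∨ (addCayley s).Adj u v) ∧ φ u = c := by
  obtain ⟨g, hg, hφg⟩ := hφ (-φ v + c)
  refine ⟨v + g, ?_, by rw [map_add, hφg, add_neg_cancel_left]⟩
  by_cases hgv : v + g = v
  · exact Or.inl hgv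
  refine Or.inr ((addCayley_adj' s _ _).2 ⟨hgv, ?_⟩)
  rcases hg with rfl | hg | hg
  · exact absurd (add_zero v) hgv
  · exact ⟨g, hg, Or.inr rfl⟩
  · exact ⟨-g, hg, Or.inl (add_neg_cancel_right v g)⟩

end SimpleGraph

open SimpleGraph

theorem H16_eq_addCayley : H16 = addCayley ({1, 2, 3, 4} : Set (ZMod 16)) := by
  ext u v
  rw [addCayley_adj, neg_add_eq_sub, neg_add_eq_sub, ← sub_ne_zero]
  simp only [H16, ← neg_sub u v, Set.mem_insert_iff, Set.mem_singleton_iff]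
  generalize u - v = d
  revert d
  decide

theorem β16_eq_castHom : β16 = ZMod.castHom (by norm_num : 8 ∣ 16) (ZMod 8) := rfl

/-- `β16` is a proper 8-colouring of `H16`, and every colour appears in the closed
neighbourhood of every vertex, i.e. `β16` is a frozen 8-colouring of `H16`. -/
theorem statement16 :
    (∀ i j : ZMod 16, H16.Adj i j → β16 i ≠ β16 j) ∧
    (∀ (v : ZMod 16) (c : Fin 8), ∃ u : ZMod 16, (u = v ∨ H16.Adj u v) ∧ β16 u = c) := by
  let φ := (ZMod.castHom (by norm_num : 8 ∣ 16) (ZMod 8)).toAddMonoidHom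
  have hker : ∀ g ∈ ({1, 2, 3, 4} : Set (ZMod 16)), φ g ≠ 0 := by
    simp only [Set.mem_insert_iff, Set.mem_singleton_iff]
    decide
  have hsurj : ∀ c, ∃ g, (g = 0 ∨ g ∈ ({1, 2, 3, 4} : Set (ZMod 16)) ∨
      -g ∈ ({1, 2, 3, 4} : Set (ZMod 16))) ∧ φ g = c := by
    simp only [Set.mem_insert_iff, Set.mem_singleton_iff]
    decide
  rw [H16_eq_addCayley, β16_eq_castHom]
  exact ⟨fun i j => map_ne_map_of_addCayley_adj φ hker,
    exists_addCayley_closedNbhd_map_eq φ hsurj⟩
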